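/- Let G be a graph with a 2-edge-cut {u1u2, v1v2}, where G − {u1u2, v1v2} has components G1 (containing u1, v1) and G2 (containing u2, v2). Let G1' = G1 + u1v1. If S is a feedback vertex set of G1' and S' is a feedback vertex set of G2, then S ∪ S' is a feedback vertex set of G; hence fvs(G) ≤ fvs(G1') + fvs(G2). -/

import Mathlib

/- A multigraph on vertex type `V` is represented by its multiset of edges,
   each edge being an unordered pair (`Sym2 V`); loops are `s(v, v)` and
   parallel edges are repeated elements of the multiset. -/

open Classical

namespace MG

variable {V : Type*}

/-- Degree of a vertex (a loop counts twice). -/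
noncomputable def deg (G : Multiset (Sym2 V)) (v : V) : ℕ :=
  (G.map fun e => if e = s(v, v) then 2 else if v ∈ e then 1 else 0).sum

/-- The vertices touched by some edge. -/
def support (G : Multiset (Sym2 V)) : Set V := {v | ∃ e ∈ G, v ∈ e}

/-- Adjacency. -/
def Adj (G : Multiset (Sym2 V)) (a b : V) : Prop := s(a, b) ∈ G

/-- Reachability. -/
def Reach (G : Multiset (Sym2 V)) : V → V → Prop := Relation.ReflTransGen (Adj G)

/-- Connectedness (of the non-isolated vertices). -/
def Conn (G : Multiset (Sym2 V)) : Prop :=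
  (support G).Nonempty ∧ ∀ a ∈ support G, ∀ b ∈ support G, Reach G a b

/-- A multigraph is a cycle iff it is nonempty, connected and 2-regular. -/
def IsCycle (C : Multiset (Sym2 V)) : Prop :=
  C ≠ 0 ∧ Conn C ∧ ∀ v ∈ support C, deg C v = 2

/-- A forest contains no cycle. -/
def IsForest (G : Multiset (Sym2 V)) : Prop := ∀ C ≤ G, ¬ IsCycle C

/-- Delete a set of vertices (removing all incident edges). -/
noncomputable def deleteVerts (G : Multiset (Sym2 V)) (S : Set V) : Multiset (Sym2 V) :=
  G.filter fun e => ∀ v ∈ e, v ∉ S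

/-- Minimum size of a feedback vertex set. -/
noncomputable def fvs (G : Multiset (Sym2 V)) : ℕ :=
  sInf {n | ∃ S : Finset V, S.card = n ∧ IsForest (deleteVerts G ↑S)}

/-- `f` is a packing of `n` pairwise vertex-disjoint cycles in `G`. -/
def IsCyclePackingOn (G : Multiset (Sym2 V)) {n : ℕ} (f : Fin n → Multiset (Sym2 V)) : Prop :=
  (∀ i, f i ≤ G ∧ IsCycle (f i)) ∧
    ∀ i j, i ≠ j → Disjoint (support (f i)) (support (f j))

/-- Maximum size of a cycle packing. -/
noncomputable def cp (G : Multiset (Sym2 V)) : ℕ :=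
  sSup {n | ∃ f : Fin n → Multiset (Sym2 V), IsCyclePackingOn G f}

/-- `H` is a minor of the multigraph `G` (branch-set definition). -/
def HasMinor {W : Type*} (G : Multiset (Sym2 V)) (H : SimpleGraph W) : Prop :=
  ∃ B : W → Set V, (∀ w, (B w).Nonempty) ∧
    (∀ w w', w ≠ w' → Disjoint (B w) (B w')) ∧
    (∀ w, ∀ a ∈ B w, ∀ b ∈ B w,
      Relation.ReflTransGen (fun x y => Adj G x y ∧ x ∈ B w ∧ y ∈ B w) a b) ∧
    (∀ w w', H.Adj w w' → ∃ a ∈ B w, ∃ b ∈ B w', Adj G a b)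

/-- Planarity, via Wagner's characterization: no `K₅` minor and no `K₃,₃` minor. -/
def Planar (G : Multiset (Sym2 V)) : Prop :=
  ¬ HasMinor G (SimpleGraph.completeGraph (Fin 5)) ∧
    ¬ HasMinor G (completeBipartiteGraph (Fin 3) (Fin 3))

/-- All degrees are at most 3. -/
def Subcubic (G : Multiset (Sym2 V)) : Prop := ∀ v, deg G v ≤ 3

/-- `H` is a connected component of `M`. -/
def IsComponent (M H : Multiset (Sym2 V)) : Prop :=
  H ≤ M ∧ Conn H ∧ ∀ e ∈ M - H, ∀ v ∈ e, v ∉ support H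

end MG

/-!
Every degree of a cycle `C` is even, so `C` has an even number of edges crossing `V(G1)`
(handshake on that side); inside `G - (S ∪ S')` these are among the two cut edges. If `C` uses
no cut edge, its edges on one side form a nonempty 2-regular graph, which contains a cycle of
`G1 - S` or `G2 - S'`. If it uses both, replacing them by `u1v1` gives a nonempty 2-regular
subgraph of `G1' - S`, which again contains a cycle. The bound on `fvs` follows by taking
optimal sets on both sides.
-/

theorem Set.mem_sym2_iff_forall {α : Type*} {s : Set α} {z : Sym2 α} :
    z ∈ s.sym2 ↔ ∀ a ∈ z, a ∈ s := by
  induction z using Sym2.ind with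
  | _ a b => simp

theorem Multiset.eq_zero_or_eq_pair_of_le_pair {α : Type*} {a b : α} {M : Multiset α}
    (h : M ≤ {a, b}) (he : Even (card M)) : M = 0 ∨ M = {a, b} := by
  have hcard : card M ≤ 2 := by simpa using card_le_card h
  obtain ⟨k, hk⟩ := he
  obtain h0 | h2 : card M = 0 ∨ card M = 2 := by omega
  · exact .inl (card_eq_zero.1 h0)
  · exact .inr (eq_of_le_of_card_le h (by simp [h2]))

open Multiset

namespace MG

variable {V : Type*}

theorem toMultiset_mk (a b : V) : s(a, b).toMultiset = {a, b} := rfl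

theorem deg_eq_count_bind (M : Multiset (Sym2 V)) (v : V) :
    deg M v = count v (M.bind Sym2.toMultiset) := by
  rw [deg, count_bind]
  congr 1
  refine map_congr rfl fun e _ => ?_
  induction e using Sym2.ind with
  | _ a b =>
    by_cases ha : v = a <;> by_cases hb : v = b <;> subst_vars <;>
      simp [toMultiset_mk, *, Ne.symm]

@[simp]
theorem deg_zero (v : V) : deg (0 : Multiset (Sym2 V)) v = 0 := rfl

theorem deg_add (M N : Multiset (Sym2 V)) (v : V) : deg (M + N) v = deg M v + deg N v := by
  simp only [deg_eq_count_bind, add_bind, count_add]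

theorem deg_cons (a b : V) (M : Multiset (Sym2 V)) (v : V) :
    deg (s(a, b) ::ₘ M) v = count v {a, b} + deg M v := by
  simp only [deg_eq_count_bind, cons_bind, count_add, toMultiset_mk]

theorem deg_eq_zero {M : Multiset (Sym2 V)} {v : V} (h : ∀ e ∈ M, v ∉ e) : deg M v = 0 := by
  rw [deg_eq_count_bind, count_eq_zero, mem_bind]
  rintro ⟨e, he, hv⟩
  exact h e he (Sym2.mem_toMultiset.1 hv)

theorem deg_filter_of_forall {M : Multiset (Sym2 V)} {v : V} {p : Sym2 V → Prop}
    [DecidablePred p] (h : ∀ e ∈ M, v ∈ e → p e) : deg (M.filter p) v = deg M v := by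
  conv_rhs => rw [← filter_add_not p M, deg_add]
  rw [deg_eq_zero (M := M.filter (¬p ·)), add_zero]
  intro e he hv
  exact (mem_filter.1 he).2 (h e (mem_of_mem_filter he) hv)

theorem support_mono {M N : Multiset (Sym2 V)} (h : M ≤ N) : support M ⊆ support N :=
  fun _ ⟨e, he, hv⟩ => ⟨e, mem_of_le h he, hv⟩

theorem IsCycle.even_deg {C : Multiset (Sym2 V)} (hC : IsCycle C) (v : V) : Even (deg C v) := by
  by_cases hv : v ∈ support C
  · rw [hC.2.2 v hv]
    exact even_two
  · rw [deg_eq_zero fun e he hve => hv ⟨e, he, hve⟩]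
    exact .zero

theorem le_deleteVerts_iff {M N : Multiset (Sym2 V)} {S : Set V} :
    M ≤ deleteVerts N S ↔ M ≤ N ∧ ∀ e ∈ M, ∀ v ∈ e, v ∉ S :=
  le_filter

theorem Adj.symm {M : Multiset (Sym2 V)} {a b : V} (h : Adj M a b) : Adj M b a := by
  rwa [Adj, Sym2.eq_swap]

instance (M : Multiset (Sym2 V)) : Std.Symm (Adj M) := ⟨fun _ _ => Adj.symm⟩

theorem Reach.symm {M : Multiset (Sym2 V)} {a b : V} (h : Reach M a b) : Reach M b a :=
  Std.Symm.symm (r := Relation.ReflTransGen (Adj M)) _ _ h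

theorem reach_of_mem {M : Multiset (Sym2 V)} {e : Sym2 V} (he : e ∈ M) {a b : V} (ha : a ∈ e)
    (hb : b ∈ e) : Reach M a b := by
  induction e using Sym2.ind with
  | _ x y =>
    have hxy : Reach M x y := .single he
    rcases Sym2.mem_iff.1 ha with rfl | rfl <;> rcases Sym2.mem_iff.1 hb with rfl | rfl
    exacts [.refl, hxy, hxy.symm, .refl]

/-- The edges of `M` in the connected component of `x`. -/
noncomputable def reachComponent (M : Multiset (Sym2 V)) (x : V) : Multiset (Sym2 V) :=
  M.filter fun e => ∃ v ∈ e, Reach M x v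

theorem reach_of_mem_support_reachComponent {M : Multiset (Sym2 V)} {x v : V}
    (hv : v ∈ support (reachComponent M x)) : Reach M x v := by
  obtain ⟨e, he, hve⟩ := hv
  obtain ⟨he, w, hwe, hxw⟩ := mem_filter.1 he
  exact hxw.trans (reach_of_mem he hwe hve)

theorem Reach.reachComponent {M : Multiset (Sym2 V)} {x v : V} (h : Reach M x v) :
    Reach (reachComponent M x) x v := by
  induction h with
  | refl => exact .refl
  | tail hxa hab ih => exact ih.tail (mem_filter.2 ⟨hab, _, Sym2.mem_mk_left _ _, hxa⟩)

theorem isCycle_reachComponent {M : Multiset (Sym2 V)} {x : V} (hx : x ∈ support M)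
    (h2 : ∀ v ∈ support M, deg M v = 2) : IsCycle (reachComponent M x) := by
  obtain ⟨e, he, hxe⟩ := hx
  have heH : e ∈ reachComponent M x := mem_filter.2 ⟨he, x, hxe, .refl⟩
  refine ⟨fun h0 => notMem_zero e (h0 ▸ heH), ⟨⟨x, e, heH, hxe⟩, fun a ha b hb => ?_⟩,
    fun v hv => ?_⟩
  · exact (reach_of_mem_support_reachComponent ha).reachComponent.symm.trans
      (reach_of_mem_support_reachComponent hb).reachComponent
  · rw [MG.reachComponent, deg_filter_of_forall fun e _ hve =>
      ⟨v, hve, reach_of_mem_support_reachComponent hv⟩]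
    exact h2 v (support_mono (filter_le _ _) hv)

theorem exists_isCycle_le {M : Multiset (Sym2 V)} (hM : M ≠ 0)
    (h2 : ∀ v ∈ support M, deg M v = 2) : ∃ C ≤ M, IsCycle C := by
  obtain ⟨e, he⟩ := exists_mem_of_ne_zero hM
  exact ⟨_, filter_le _ _, isCycle_reachComponent ⟨e, he, e.out_fst_mem⟩ h2⟩

theorem IsForest.eq_zero_of_le {M N : Multiset (Sym2 V)} (hN : IsForest N) (hM : M ≤ N)
    (h2 : ∀ v ∈ support M, deg M v = 2) : M = 0 := by
  by_contra hM0
  obtain ⟨C, hC, hcyc⟩ := exists_isCycle_le hM0 h2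
  exact hN C (hC.trans hM) hcyc

def IsCrossing (X : Set V) (e : Sym2 V) : Prop := (∃ v ∈ e, v ∈ X) ∧ ∃ v ∈ e, v ∉ X

theorem even_card_filter_bind_toMultiset_iff (M : Multiset (Sym2 V)) (X : Set V) :
    Even (card ((M.bind Sym2.toMultiset).filter (· ∈ X))) ↔
      Even (card (M.filter (IsCrossing X))) := by
  induction M using Multiset.induction with
  | empty => simp
  | cons e M ih =>
    induction e using Sym2.ind with
    | _ a b =>
      rw [cons_bind, filter_add, card_add, Nat.even_add, ih, toMultiset_mk]
      by_cases ha : a ∈ X <;> by_cases hb : b ∈ X <;>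
        simp [IsCrossing, filter_cons, filter_singleton, ha, hb, Nat.even_add_one]

theorem even_card_filter_isCrossing {M : Multiset (Sym2 V)} (X : Set V)
    (h : ∀ v, Even (deg M v)) : Even (card (M.filter (IsCrossing X))) := by
  rw [← even_card_filter_bind_toMultiset_iff, ← toFinset_sum_count_eq]
  refine Finset.even_sum _ fun v _ => ?_
  rw [count_filter, ← deg_eq_count_bind]
  split_ifs
  exacts [h v, .zero]

theorem isCrossing_compl (X : Set V) : IsCrossing Xᶜ = IsCrossing X := by
  ext e
  simp only [IsCrossing, Set.mem_compl_iff, not_not]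
  exact and_comm

theorem filter_isCrossing_add_filter_add_filter (M : Multiset (Sym2 V)) (X : Set V) :
    M.filter (IsCrossing X) + M.filter (· ∈ X.sym2) + M.filter (· ∈ Xᶜ.sym2) = M := by
  ext e
  induction e using Sym2.ind with
  | _ a b =>
    simp only [count_add, count_filter, IsCrossing, Set.mk_mem_sym2_iff, Set.mem_compl_iff,
      Sym2.mem_iff, exists_eq_or_imp, exists_eq_left]
    by_cases ha : a ∈ X <;> by_cases hb : b ∈ X <;> simp [ha, hb]

theorem mem_of_mem_support_filter_mem_sym2 {M : Multiset (Sym2 V)} {X : Set V} {v : V}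
    (hv : v ∈ support (M.filter (· ∈ X.sym2))) : v ∈ X := by
  obtain ⟨e, he, hve⟩ := hv
  exact Set.mem_sym2_iff_forall.1 (mem_filter.1 he).2 v hve

theorem deg_eq_deg_filter_isCrossing_add (M : Multiset (Sym2 V)) {X : Set V} {v : V}
    (hv : v ∈ X) :
    deg M v = deg (M.filter (IsCrossing X)) v + deg (M.filter (· ∈ X.sym2)) v := by
  conv_lhs => rw [← filter_isCrossing_add_filter_add_filter M X, deg_add, deg_add]
  rw [deg_eq_zero fun e he hve =>
    (Set.mem_sym2_iff_forall.1 (mem_filter.1 he).2 v hve : v ∈ Xᶜ) hv, add_zero]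

/-- A cycle crossing `X` exactly in the edges `u₁u₂, v₁v₂` stays 2-regular on `X` when these
are replaced by `u₁v₁`. -/
theorem deg_cons_filter_mem_sym2_eq_two {C : Multiset (Sym2 V)} {X : Set V} {u1 v1 u2 v2 : V}
    (h2 : ∀ v ∈ support C, deg C v = 2)
    (hcross : C.filter (IsCrossing X) = {s(u1, u2), s(v1, v2)})
    (hu1 : u1 ∈ X) (hv1 : v1 ∈ X) (hu2 : u2 ∉ X) (hv2 : v2 ∉ X) :
    ∀ v ∈ support (s(u1, v1) ::ₘ C.filter (· ∈ X.sym2)),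
      deg (s(u1, v1) ::ₘ C.filter (· ∈ X.sym2)) v = 2 := by
  intro v hv
  have hXC : v ∈ X ∧ v ∈ support C := by
    obtain ⟨e, he, hve⟩ := hv
    rcases mem_cons.1 he with rfl | he
    · have hA : s(u1, u2) ∈ C := mem_of_mem_filter (p := IsCrossing X) (by simp [hcross])
      have hB : s(v1, v2) ∈ C := mem_of_mem_filter (p := IsCrossing X) (by simp [hcross])
      rcases Sym2.mem_iff.1 hve with rfl | rfl
      exacts [⟨hu1, _, hA, Sym2.mem_mk_left _ _⟩, ⟨hv1, _, hB, Sym2.mem_mk_left _ _⟩]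
    · exact ⟨mem_of_mem_support_filter_mem_sym2 ⟨e, he, hve⟩,
        support_mono (filter_le _ _) ⟨e, he, hve⟩⟩
  have hvu2 : v ≠ u2 := fun h => hu2 (h ▸ hXC.1)
  have hvv2 : v ≠ v2 := fun h => hv2 (h ▸ hXC.1)
  rw [deg_cons, ← h2 v hXC.2, deg_eq_deg_filter_isCrossing_add C hXC.1, hcross,
    show ({s(u1, u2), s(v1, v2)} : Multiset _) = s(u1, u2) ::ₘ s(v1, v2) ::ₘ 0 from rfl,
    deg_cons, deg_cons, deg_zero]
  simp [count_cons, count_singleton, hvu2, hvv2]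
  omega

section TwoEdgeCut

variable {G1 G2 : Multiset (Sym2 V)} {u1 v1 u2 v2 : V}

theorem filter_mem_sym2_twoEdgeCut (hdisj : Disjoint (support G1) (support G2))
    (hu2 : u2 ∈ support G2) (hv2 : v2 ∈ support G2) :
    (s(u1, u2) ::ₘ s(v1, v2) ::ₘ (G1 + G2)).filter (· ∈ (support G1).sym2) = G1 := by
  have hG1 : G1.filter (· ∈ (support G1).sym2) = G1 :=
    filter_eq_self.2 fun e he => Set.mem_sym2_iff_forall.2 fun _ hv => ⟨e, he, hv⟩
  have hG2 : G2.filter (· ∈ (support G1).sym2) = 0 :=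
    filter_eq_nil.2 fun e he h => hdisj.notMem_of_mem_left
      (Set.mem_sym2_iff_forall.1 h _ e.out_fst_mem) ⟨e, he, e.out_fst_mem⟩
  rw [filter_cons_of_neg _ fun h => hdisj.notMem_of_mem_right hu2 h.2,
    filter_cons_of_neg _ fun h => hdisj.notMem_of_mem_right hv2 h.2, filter_add, hG1, hG2,
    add_zero]

theorem filter_mem_compl_sym2_twoEdgeCut (hdisj : Disjoint (support G1) (support G2))
    (hu1 : u1 ∈ support G1) (hv1 : v1 ∈ support G1) :
    (s(u1, u2) ::ₘ s(v1, v2) ::ₘ (G1 + G2)).filter (· ∈ (support G1)ᶜ.sym2) = G2 := by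
  have hG1 : G1.filter (· ∈ (support G1)ᶜ.sym2) = 0 :=
    filter_eq_nil.2 fun e he h =>
      Set.mem_sym2_iff_forall.1 h _ e.out_fst_mem ⟨e, he, e.out_fst_mem⟩
  have hG2 : G2.filter (· ∈ (support G1)ᶜ.sym2) = G2 :=
    filter_eq_self.2 fun e he => Set.mem_sym2_iff_forall.2 fun _ hv =>
      hdisj.notMem_of_mem_right ⟨e, he, hv⟩
  rw [filter_cons_of_neg _ fun h => h.1 hu1, filter_cons_of_neg _ fun h => h.1 hv1, filter_add,
    hG1, hG2, zero_add]

theorem filter_isCrossing_twoEdgeCut (hdisj : Disjoint (support G1) (support G2))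
    (hu1 : u1 ∈ support G1) (hv1 : v1 ∈ support G1)
    (hu2 : u2 ∈ support G2) (hv2 : v2 ∈ support G2) :
    (s(u1, u2) ::ₘ s(v1, v2) ::ₘ (G1 + G2)).filter (IsCrossing (support G1)) =
      {s(u1, u2), s(v1, v2)} := by
  have hcross {a b : V} (ha : a ∈ support G1) (hb : b ∈ support G2) :
      IsCrossing (support G1) s(a, b) :=
    ⟨⟨a, Sym2.mem_mk_left a b, ha⟩,
      ⟨b, Sym2.mem_mk_right a b, hdisj.notMem_of_mem_right hb⟩⟩
  have hG : (G1 + G2).filter (IsCrossing (support G1)) = 0 := by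
    refine filter_eq_nil.2 fun e he ⟨⟨a, hae, ha⟩, ⟨b, hbe, hb⟩⟩ => ?_
    rcases mem_add.1 he with he | he
    · exact hb ⟨e, he, hbe⟩
    · exact hdisj.notMem_of_mem_right ⟨e, he, hae⟩ ha
  rw [filter_cons_of_pos _ (hcross hu1 hu2), filter_cons_of_pos _ (hcross hv1 hv2), hG]
  rfl

theorem isForest_deleteVerts_union_of_twoEdgeCut (hdisj : Disjoint (support G1) (support G2))
    (hu1 : u1 ∈ support G1) (hv1 : v1 ∈ support G1)
    (hu2 : u2 ∈ support G2) (hv2 : v2 ∈ support G2) {S S' : Set V}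
    (hF1 : IsForest (deleteVerts (s(u1, v1) ::ₘ G1) S)) (hF2 : IsForest (deleteVerts G2 S')) :
    IsForest (deleteVerts (s(u1, u2) ::ₘ s(v1, v2) ::ₘ (G1 + G2)) (S ∪ S')) := by
  intro C hC hcyc
  obtain ⟨hCG, hCS⟩ := le_deleteVerts_iff.1 hC
  set X := support G1
  have hC1 : C.filter (· ∈ X.sym2) ≤ G1 :=
    filter_mem_sym2_twoEdgeCut hdisj hu2 hv2 ▸ filter_le_filter _ hCG
  have hC2 : C.filter (· ∈ Xᶜ.sym2) ≤ G2 :=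
    filter_mem_compl_sym2_twoEdgeCut hdisj hu1 hv1 ▸ filter_le_filter _ hCG
  have hcut : C.filter (IsCrossing X) ≤ {s(u1, u2), s(v1, v2)} :=
    filter_isCrossing_twoEdgeCut hdisj hu1 hv1 hu2 hv2 ▸ filter_le_filter _ hCG
  have hC1S : ∀ e ∈ C.filter (· ∈ X.sym2), ∀ v ∈ e, v ∉ S := fun e he v hve hvS =>
    hCS e (mem_of_mem_filter he) v hve (.inl hvS)
  rcases eq_zero_or_eq_pair_of_le_pair hcut (even_card_filter_isCrossing X hcyc.even_deg)
    with h0 | hAB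
  · have hdeg {Y : Set V} (hY : C.filter (IsCrossing Y) = 0) :
        ∀ v ∈ support (C.filter (· ∈ Y.sym2)), deg (C.filter (· ∈ Y.sym2)) v = 2 := by
      intro v hv
      rw [← hcyc.2.2 v (support_mono (filter_le _ _) hv),
        deg_eq_deg_filter_isCrossing_add C (mem_of_mem_support_filter_mem_sym2 hv), hY,
        deg_zero, zero_add]
    have hC1_zero : C.filter (· ∈ X.sym2) = 0 :=
      hF1.eq_zero_of_le (le_deleteVerts_iff.2 ⟨hC1.trans (le_cons_self _ _), hC1S⟩) (hdeg h0)
    have hC2_zero : C.filter (· ∈ Xᶜ.sym2) = 0 :=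
      hF2.eq_zero_of_le (le_deleteVerts_iff.2 ⟨hC2, fun e he v hve hvS =>
        hCS e (mem_of_mem_filter he) v hve (.inr hvS)⟩) (hdeg (isCrossing_compl X ▸ h0))
    apply hcyc.1
    rw [← filter_isCrossing_add_filter_add_filter C X, h0, hC1_zero, hC2_zero, add_zero, add_zero]
  · have hA : s(u1, u2) ∈ C := mem_of_mem_filter (p := IsCrossing X) (by simp [hAB])
    have hB : s(v1, v2) ∈ C := mem_of_mem_filter (p := IsCrossing X) (by simp [hAB])
    refine cons_ne_zero (hF1.eq_zero_of_le ?_ (deg_cons_filter_mem_sym2_eq_two hcyc.2.2 hAB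
      hu1 hv1 (hdisj.notMem_of_mem_right hu2) (hdisj.notMem_of_mem_right hv2)))
    refine le_deleteVerts_iff.2 ⟨cons_le_cons _ hC1, fun e he => ?_⟩
    rcases mem_cons.1 he with rfl | he
    · rintro v hv hvS
      rcases Sym2.mem_iff.1 hv with rfl | rfl
      exacts [hCS _ hA v (Sym2.mem_mk_left _ _) (.inl hvS),
        hCS _ hB v (Sym2.mem_mk_left _ _) (.inl hvS)]
    · exact hC1S e he

end TwoEdgeCut

theorem isForest_zero : IsForest (0 : Multiset (Sym2 V)) :=
  fun _ hC hcyc => hcyc.1 (le_zero.1 hC)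

theorem fvs_le_card {M : Multiset (Sym2 V)} {S : Finset V} (h : IsForest (deleteVerts M ↑S)) :
    fvs M ≤ S.card :=
  Nat.sInf_le ⟨S, rfl, h⟩

theorem exists_card_eq_fvs (M : Multiset (Sym2 V)) :
    ∃ S : Finset V, S.card = fvs M ∧ IsForest (deleteVerts M ↑S) := by
  have hall : deleteVerts M ↑(M.bind Sym2.toMultiset).toFinset = 0 :=
    filter_eq_nil.2 fun e he h =>
      h e.out.1 e.out_fst_mem (by simpa using ⟨e, he, e.out_fst_mem⟩)
  exact Nat.sInf_mem (s := {n | ∃ S : Finset V, S.card = n ∧ IsForest (deleteVerts M ↑S)})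
    ⟨_, _, rfl, hall ▸ isForest_zero⟩

end MG

theorem fvs_two_edge_cut_general {V : Type*} (G G1 G2 : Multiset (Sym2 V)) (u1 v1 u2 v2 : V)
    (hG : G = s(u1, u2) ::ₘ s(v1, v2) ::ₘ (G1 + G2))
    (hdisj : Disjoint (MG.support G1) (MG.support G2))
    (hu1 : u1 ∈ MG.support G1) (hv1 : v1 ∈ MG.support G1)
    (hu2 : u2 ∈ MG.support G2) (hv2 : v2 ∈ MG.support G2) :
    (∀ S S' : Finset V,
      MG.IsForest (MG.deleteVerts (s(u1, v1) ::ₘ G1) ↑S) →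
      MG.IsForest (MG.deleteVerts G2 ↑S') →
      MG.IsForest (MG.deleteVerts G ↑(S ∪ S'))) ∧
    MG.fvs G ≤ MG.fvs (s(u1, v1) ::ₘ G1) + MG.fvs G2 := by
  have hunion (S S' : Finset V) (hS : MG.IsForest (MG.deleteVerts (s(u1, v1) ::ₘ G1) ↑S))
      (hS' : MG.IsForest (MG.deleteVerts G2 ↑S')) :
      MG.IsForest (MG.deleteVerts G ↑(S ∪ S')) := by
    rw [hG, Finset.coe_union]
    exact MG.isForest_deleteVerts_union_of_twoEdgeCut hdisj hu1 hv1 hu2 hv2 hS hS'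
  refine ⟨hunion, ?_⟩
  obtain ⟨S, hS, hF⟩ := MG.exists_card_eq_fvs (s(u1, v1) ::ₘ G1)
  obtain ⟨S', hS', hF'⟩ := MG.exists_card_eq_fvs G2
  calc MG.fvs G ≤ (S ∪ S').card := MG.fvs_le_card (hunion S S' hF hF')
    _ ≤ S.card + S'.card := Finset.card_union_le S S'
    _ = _ := by rw [hS, hS']

/-- For a 2-edge-cut `{u₁u₂, v₁v₂}` separating `G` into components `G1` (containing
`u₁, v₁`) and `G2` (containing `u₂, v₂`), with `G1' = G1 + u₁v₁`: the union of a
feedback vertex set of `G1'` and one of `G2` is a feedback vertex set of `G`;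
hence `fvs G ≤ fvs G1' + fvs G2`. -/
theorem fvs_two_edge_cut {V : Type*} (G G1 G2 : Multiset (Sym2 V)) (u1 v1 u2 v2 : V)
    (hG : G = s(u1, u2) ::ₘ s(v1, v2) ::ₘ (G1 + G2))
    (hdisj : Disjoint (MG.support G1) (MG.support G2))
    (hc1 : MG.Conn G1) (hc2 : MG.Conn G2)
    (hu1 : u1 ∈ MG.support G1) (hv1 : v1 ∈ MG.support G1)
    (hu2 : u2 ∈ MG.support G2) (hv2 : v2 ∈ MG.support G2) :
    (∀ S S' : Finset V,
      MG.IsForest (MG.deleteVerts (s(u1, v1) ::ₘ G1) ↑S) →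
      MG.IsForest (MG.deleteVerts G2 ↑S') →
      MG.IsForest (MG.deleteVerts G ↑(S ∪ S'))) ∧
    MG.fvs G ≤ MG.fvs (s(u1, v1) ::ₘ G1) + MG.fvs G2 :=
  fvs_two_edge_cut_general G G1 G2 u1 v1 u2 v2 hG hdisj hu1 hv1 hu2 hv2
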